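/- Suppose F = (1/n) Σ_{i=1}^n f_i is average-L-smooth, and let F* be a lower bound of F. Run SARAH with learning rate η = 2/(3L√(m+1)). Then η ≤ 2/(L(√(1+4m)+1)), and for every ε > 0, if the number of outer iterations S satisfies S ≥ 3L(F(w̃_0) − F*)/(√(m+1) ε), then (1/((m+1)S)) Σ_{s=1}^{S} Σ_{t=0}^{m} E[‖∇F(w_t^{(s)})‖²] ≤ ε. Moreover the total number of stochastic gradient evaluations equals S(n + 2m). -/

import Mathlib

noncomputable section

abbrev Vec (d : ℕ) : Type := EuclideanSpace ℝ (Fin d)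

/-- One inner loop of SARAH: `(innerSeq d n f F η x0 ι t) = (w_t, v_t)`, where the step from
`t` to `t+1` uses the sampled index `ι t` (so `ι t` plays the role of `i_{t+1}`). -/
noncomputable def innerSeq (d n : ℕ) (f : Fin n → Vec d → ℝ) (F : Vec d → ℝ) (η : ℝ)
    (x0 : Vec d) (ι : ℕ → Fin n) : ℕ → Vec d × Vec d
  | 0 => (x0, gradient F x0)
  | t + 1 =>
    let p := innerSeq d n f F η x0 ι t
    let w := p.1 - η • p.2
    (w, gradient (f (ι t)) w - gradient (f (ι t)) p.1 + p.2)

/-- Outer iterates of SARAH: `outerSeq d n m f F η w0 ω s = w̃_s`, where the `s`-th outer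
loop uses the index sequence `ω s` and `w̃_s = w_{m+1}^{(s)}`. -/
noncomputable def outerSeq (d n m : ℕ) (f : Fin n → Vec d → ℝ) (F : Vec d → ℝ) (η : ℝ)
    (w0 : Vec d) (ω : ℕ → ℕ → Fin n) : ℕ → Vec d
  | 0 => w0
  | s + 1 => (innerSeq d n f F η (outerSeq d n m f F η w0 ω s) (ω s) (m + 1)).1

/-- Expectation over the uniformly random index sequences of SARAH with (at least) `S` outer
loops of `m` inner steps each: the average of `X` over all `ω : Fin S → Fin m → Fin n`,
extended by a dummy index outside this range. -/
noncomputable def sarahE (n m S : ℕ) (hn : 0 < n) (X : (ℕ → ℕ → Fin n) → ℝ) : ℝ :=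
  (∑ ω : Fin S → Fin m → Fin n,
      X fun s t => if h : s < S ∧ t < m then ω ⟨s, h.1⟩ ⟨t, h.2⟩ else ⟨0, hn⟩) /
    (Fintype.card (Fin S → Fin m → Fin n) : ℝ)


/-- Total number of stochastic gradient evaluations of SARAH: each of the `S` outer
iterations uses `n` evaluations for the full gradient and `2m` in the inner loop. -/
def sarahCost (n m S : ℕ) : ℕ := S * (n + 2 * m)

/-!
Along one inner loop the descent lemma for the `L`-smooth `F` gives
`F w_{t+1} ≤ F w_t - η/2 ‖∇F w_t‖² - η/2 (1 - Lη) ‖v_t‖² + η/2 ‖∇F w_t - v_t‖²`.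
Averaged over the fresh index, the estimator error `‖∇F w_t - v_t‖²` grows by at most
`L²η² ‖v_t‖²` per step (the variance of the SARAH correction is at most its second moment) and
vanishes at `t = 0`, so over a loop its total is at most `L²η²m Σ_t ‖v_t‖²`. When
`L²η²m + Lη ≤ 1`, which is exactly `η ≤ 2/(L(√(1+4m)+1))`, the `‖v_t‖²` terms are absorbed and
`Σ_t E‖∇F w_t‖² ≤ (2/η) E[F w̃_{s-1} - F w̃_s]`. Summing over the outer loops telescopes to
`(2/η)(F w̃_0 - F*)`, and `2/η = 3L√(m+1)`.
-/

open InnerProductSpace Finset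

section Smoothness

variable {E : Type*} [NormedAddCommGroup E] [InnerProductSpace ℝ E]

theorem sum_norm_add_sq {ι : Type*} [Fintype ι] (b : ι → E) (A : E) :
    ∑ i, ‖b i + A‖ ^ 2
      = ∑ i, ‖b i‖ ^ 2 + 2 * ⟪∑ i, b i, A⟫_ℝ + Fintype.card ι * ‖A‖ ^ 2 := by
  simp only [norm_add_sq_real, sum_add_distrib, sum_inner, mul_sum, sum_const, card_univ,
    nsmul_eq_mul]

theorem sum_norm_sub_sq_of_sum_eq {ι : Type*} [Fintype ι] {c : ι → E} {D : E}
    (hc : ∑ i, c i = (Fintype.card ι : ℝ) • D) :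
    ∑ i, ‖c i - D‖ ^ 2 = ∑ i, ‖c i‖ ^ 2 - Fintype.card ι * ‖D‖ ^ 2 := by
  simp only [sub_eq_add_neg, sum_norm_add_sq, hc, inner_neg_right, real_inner_smul_left,
    real_inner_self_eq_norm_sq, norm_neg]
  ring

theorem descent_lemma [CompleteSpace E] {F : E → ℝ} {G : E → E} {L : ℝ}
    (hG : ∀ x, HasGradientAt F (G x) x)
    (hLip : ∀ x y, ‖G x - G y‖ ≤ L * ‖x - y‖) (x y : E) :
    F y ≤ F x + ⟪G x, y - x⟫_ℝ + L / 2 * ‖y - x‖ ^ 2 := by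
  set Δ := y - x
  set φ : ℝ → ℝ := fun τ =>
    F (x + τ • Δ) - (τ * ⟪G x, Δ⟫_ℝ + L / 2 * τ ^ 2 * ‖Δ‖ ^ 2)
  have hφ (τ : ℝ) :
      HasDerivAt φ (⟪G (x + τ • Δ) - G x, Δ⟫_ℝ - L * τ * ‖Δ‖ ^ 2) τ := by
    have hline : HasDerivAt (fun τ : ℝ => x + τ • Δ) Δ τ := by
      simpa using ((hasDerivAt_id τ).smul_const Δ).const_add x
    have hF := (hasGradientAt_iff_hasFDerivAt.mp (hG (x + τ • Δ))).comp_hasDerivAt τ hline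
    have hq : HasDerivAt (fun τ : ℝ => τ * ⟪G x, Δ⟫_ℝ + L / 2 * τ ^ 2 * ‖Δ‖ ^ 2)
        (⟪G x, Δ⟫_ℝ + L * τ * ‖Δ‖ ^ 2) τ :=
      (((hasDerivAt_id τ).mul_const ⟪G x, Δ⟫_ℝ).add
        (((hasDerivAt_pow 2 τ).const_mul (L / 2)).mul_const (‖Δ‖ ^ 2))).congr_deriv (by
          simp only [one_mul, Nat.cast_ofNat]; ring)
    exact (hF.sub hq).congr_deriv (by rw [toDual_apply_apply, inner_sub_left]; ring)
  -- `φ' ≤ 0` on `[0, ∞)` by Cauchy–Schwarz and the Lipschitz bound, so `φ 1 ≤ φ 0`.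
  have hanti : AntitoneOn φ (Set.Ici 0) := by
    refine antitoneOn_of_hasDerivWithinAt_nonpos (convex_Ici 0)
      (fun τ _ => (hφ τ).continuousAt.continuousWithinAt)
      (fun τ _ => (hφ τ).hasDerivWithinAt) ?_
    intro τ hτ
    rw [interior_Ici, Set.mem_Ioi] at hτ
    have hstep : ‖G (x + τ • Δ) - G x‖ ≤ L * τ * ‖Δ‖ := by
      simpa [norm_smul, abs_of_pos hτ, mul_assoc] using hLip (x + τ • Δ) x
    nlinarith [real_inner_le_norm (G (x + τ • Δ) - G x) Δ, norm_nonneg Δ]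
  have h01 := hanti (Set.mem_Ici.mpr le_rfl) (Set.mem_Ici.mpr zero_le_one) zero_le_one
  simp only [φ, zero_smul, add_zero, one_smul, Δ, add_sub_cancel] at h01
  linarith

theorem descent_lemma_sub_smul [CompleteSpace E] {F : E → ℝ} {G : E → E} {L : ℝ}
    (hG : ∀ x, HasGradientAt F (G x) x) (hLip : ∀ x y, ‖G x - G y‖ ≤ L * ‖x - y‖)
    (η : ℝ) (x v : E) :
    F (x - η • v) ≤ F x - η / 2 * ‖G x‖ ^ 2 - (η / 2 - L * η ^ 2 / 2) * ‖v‖ ^ 2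
      + η / 2 * ‖G x - v‖ ^ 2 := by
  have h := descent_lemma hG hLip x (x - η • v)
  rw [sub_sub_cancel_left, inner_neg_right, real_inner_smul_right, norm_neg, norm_smul,
    Real.norm_eq_abs, mul_pow, sq_abs] at h
  have hrhs : F x - η / 2 * ‖G x‖ ^ 2 - (η / 2 - L * η ^ 2 / 2) * ‖v‖ ^ 2
      + η / 2 * ‖G x - v‖ ^ 2
        = F x + -(η * ⟪G x, v⟫_ℝ) + L / 2 * (η ^ 2 * ‖v‖ ^ 2) := by
    rw [norm_sub_sq_real]; ring
  exact hrhs ▸ h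

theorem hasGradientAt_sum_div [CompleteSpace E] {ι : Type*} [Fintype ι] {f : ι → E → ℝ}
    (hf : ∀ i, Differentiable ℝ (f i)) (c : ℝ) (x : E) :
    HasGradientAt (fun w => (∑ i, f i w) / c) (c⁻¹ • ∑ i, gradient (f i) x) x := by
  rw [hasGradientAt_iff_hasFDerivAt, map_smul, map_sum]
  simp_rw [div_eq_inv_mul]
  exact (HasFDerivAt.fun_sum fun i _ =>
    hasGradientAt_iff_hasFDerivAt.mp ((hf i) x).hasGradientAt).const_mul c⁻¹

end Smoothness

section AverageSmooth

variable {E : Type*} [NormedAddCommGroup E] [InnerProductSpace ℝ E] [CompleteSpace E]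
  {n : ℕ} {f : Fin n → E → ℝ} {F : E → ℝ} {L : ℝ}

def AverageSmooth (f : Fin n → E → ℝ) (L : ℝ) : Prop :=
  ∀ w w', (∑ i, ‖gradient (f i) w - gradient (f i) w'‖ ^ 2) / n ≤ L ^ 2 * ‖w - w'‖ ^ 2

theorem hasGradientAt_of_eq_avg (hF : ∀ w, F w = (∑ i, f i w) / n)
    (hdiff : ∀ i, Differentiable ℝ (f i)) (x : E) :
    HasGradientAt F ((n : ℝ)⁻¹ • ∑ i, gradient (f i) x) x :=
  funext hF ▸ hasGradientAt_sum_div hdiff n x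

theorem hasGradientAt_gradient_of_eq_avg (hF : ∀ w, F w = (∑ i, f i w) / n)
    (hdiff : ∀ i, Differentiable ℝ (f i)) (x : E) : HasGradientAt F (gradient F x) x :=
  (hasGradientAt_of_eq_avg hF hdiff x).differentiableAt.hasGradientAt

theorem natCast_smul_gradient_of_eq_avg (hF : ∀ w, F w = (∑ i, f i w) / n)
    (hdiff : ∀ i, Differentiable ℝ (f i)) (x : E) :
    (n : ℝ) • gradient F x = ∑ i, gradient (f i) x := by
  rcases Nat.eq_zero_or_pos n with rfl | hn
  · simp
  rw [(hasGradientAt_of_eq_avg hF hdiff x).gradient, smul_inv_smul₀ (by positivity)]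

theorem sum_gradient_sub_of_eq_avg (hF : ∀ w, F w = (∑ i, f i w) / n)
    (hdiff : ∀ i, Differentiable ℝ (f i)) (w w' : E) :
    ∑ i, (gradient (f i) w - gradient (f i) w')
      = (n : ℝ) • (gradient F w - gradient F w') := by
  rw [smul_sub, natCast_smul_gradient_of_eq_avg hF hdiff, natCast_smul_gradient_of_eq_avg hF hdiff,
    sum_sub_distrib]

theorem sum_norm_sub_gradient_sub_sq (hF : ∀ w, F w = (∑ i, f i w) / n)
    (hdiff : ∀ i, Differentiable ℝ (f i)) (w w' : E) :
    ∑ i, ‖gradient (f i) w - gradient (f i) w' - (gradient F w - gradient F w')‖ ^ 2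
      = ∑ i, ‖gradient (f i) w - gradient (f i) w'‖ ^ 2
        - n * ‖gradient F w - gradient F w'‖ ^ 2 := by
  have h := sum_norm_sub_sq_of_sum_eq (c := fun i => gradient (f i) w - gradient (f i) w')
    (by rw [Fintype.card_fin]; exact sum_gradient_sub_of_eq_avg hF hdiff w w')
  rwa [Fintype.card_fin] at h

theorem norm_gradient_sub_le_of_avg (hn : 0 < n) (hF : ∀ w, F w = (∑ i, f i w) / n)
    (hdiff : ∀ i, Differentiable ℝ (f i)) (hL : 0 ≤ L)
    (havg : AverageSmooth f L) (w w' : E) :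
    ‖gradient F w - gradient F w'‖ ≤ L * ‖w - w'‖ := by
  have hvar := sum_norm_sub_gradient_sub_sq hF hdiff w w'
  have hnonneg : 0 ≤ ∑ i,
      ‖gradient (f i) w - gradient (f i) w' - (gradient F w - gradient F w')‖ ^ 2 := by
    positivity
  have hsq : ‖gradient F w - gradient F w'‖ ^ 2 ≤ (L * ‖w - w'‖) ^ 2 :=
    calc ‖gradient F w - gradient F w'‖ ^ 2
        = n * ‖gradient F w - gradient F w'‖ ^ 2 / n := by field_simp
      _ ≤ (∑ i, ‖gradient (f i) w - gradient (f i) w'‖ ^ 2) / n := by gcongr; linarith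
      _ ≤ (L * ‖w - w'‖) ^ 2 := mul_pow L _ 2 ▸ havg w w'
  exact (pow_le_pow_iff_left₀ (norm_nonneg _) (by positivity) two_ne_zero).mp hsq

theorem sum_norm_gradient_sub_sarah_estimator_le (hn : 0 < n)
    (hF : ∀ w, F w = (∑ i, f i w) / n) (hdiff : ∀ i, Differentiable ℝ (f i))
    (havg : AverageSmooth f L) (w w' v : E) :
    ∑ i, ‖gradient F w - (gradient (f i) w - gradient (f i) w' + v)‖ ^ 2
      ≤ n * ‖gradient F w' - v‖ ^ 2 + n * (L ^ 2 * ‖w - w'‖ ^ 2) := by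
  set c : Fin n → E := fun i => gradient (f i) w - gradient (f i) w'
  set D := gradient F w - gradient F w'
  have hcD : ∑ i, (c i - D) = 0 := by
    rw [sum_sub_distrib, sum_gradient_sub_of_eq_avg hF hdiff, sum_const, card_univ,
      Fintype.card_fin, ← Nat.cast_smul_eq_nsmul ℝ, sub_self]
  have hc : ∑ i, ‖c i‖ ^ 2 ≤ n * (L ^ 2 * ‖w - w'‖ ^ 2) := by
    rw [← div_le_iff₀' (by positivity)]; exact havg w w'
  calc ∑ i, ‖gradient F w - (c i + v)‖ ^ 2
      = ∑ i, ‖(c i - D) + (v - gradient F w')‖ ^ 2 := by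
        refine sum_congr rfl fun i _ => ?_
        rw [← norm_neg]; congr 2; simp only [D]; abel
    _ = ∑ i, ‖c i‖ ^ 2 - n * ‖D‖ ^ 2 + n * ‖gradient F w' - v‖ ^ 2 := by
        rw [sum_norm_add_sq, hcD, inner_zero_left, sum_norm_sub_gradient_sub_sq hF hdiff,
          norm_sub_rev v, Fintype.card_fin, mul_zero, add_zero]
    _ ≤ n * ‖gradient F w' - v‖ ^ 2 + n * (L ^ 2 * ‖w - w'‖ ^ 2) := by
        nlinarith [sq_nonneg ‖D‖, (Nat.cast_nonneg n : (0 : ℝ) ≤ n)]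

end AverageSmooth

theorem card_mul_sum_eq_sum_sum_of_indep {A B X : Type*} [Fintype A] [DecidableEq A]
    [Fintype B] (k : A) {u : (A → B) → X} (hu : ∀ ω b, u (Function.update ω k b) = u ω)
    (G : X → B → ℝ) :
    (Fintype.card B : ℝ) * ∑ ω, G (u ω) (ω k) = ∑ ω, ∑ b, G (u ω) b := by
  have hswap : Function.Involutive
      fun p : (A → B) × B => (Function.update p.1 k p.2, p.1 k) := by
    rintro ⟨ω, b⟩
    simp
  calc (Fintype.card B : ℝ) * ∑ ω, G (u ω) (ω k)
      = ∑ p : (A → B) × B, G (u p.1) (p.1 k) := by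
        rw [Fintype.sum_prod_type, mul_sum]
        simp
    _ = ∑ p : (A → B) × B, G (u p.1) p.2 :=
        (Fintype.sum_bijective _ hswap.bijective _ _ fun p => by simp [hu]).symm
    _ = ∑ ω, ∑ b, G (u ω) b := Fintype.sum_prod_type _

def extendFin {α : Type*} {m : ℕ} (a : α) (σ : Fin m → α) (j : ℕ) : α :=
  if h : j < m then σ ⟨j, h⟩ else a

section extendFin

variable {α : Type*} {m : ℕ}

@[simp]
theorem extendFin_val (a : α) (σ : Fin m → α) (k : Fin m) : extendFin a σ k = σ k := by
  simp [extendFin]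

theorem extendFin_update_of_ne (a : α) (σ : Fin m → α) (k : Fin m) (b : α) {j : ℕ}
    (hj : j ≠ k) : extendFin a (Function.update σ k b) j = extendFin a σ j := by
  unfold extendFin
  split_ifs with h
  · exact Function.update_of_ne (fun hk => hj (congrArg Fin.val hk)) _ _
  · rfl

end extendFin

theorem sum_range_succ_le_mul_sum_of_le_add {D a : ℕ → ℝ} {m : ℕ} (h0 : D 0 = 0)
    (hD : ∀ t < m, D (t + 1) ≤ D t + a t) (ha : ∀ t, 0 ≤ a t) :
    ∑ t ∈ range (m + 1), D t ≤ m * ∑ t ∈ range m, a t := by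
  have hpartial : ∀ t ≤ m, D t ≤ ∑ j ∈ range t, a j := by
    intro t
    induction t with
    | zero => simp [h0]
    | succ t ih =>
      intro ht
      rw [sum_range_succ]
      linarith [hD t (by omega), ih (by omega)]
  calc ∑ t ∈ range (m + 1), D t = ∑ t ∈ range m, D (t + 1) + D 0 := sum_range_succ' _ _
    _ ≤ ∑ _t ∈ range m, ∑ j ∈ range m, a j + 0 := by
        rw [h0]
        gcongr with t ht
        exact (hpartial (t + 1) (mem_range.mp ht)).trans
          (sum_le_sum_of_subset_of_nonneg (range_subset_range.mpr (mem_range.mp ht))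
            fun j _ _ => ha j)
    _ = m * ∑ t ∈ range m, a t := by simp

def sarahIndices {n m S : ℕ} (a : Fin n) (ω : Fin S → Fin m → Fin n) :
    ℕ → ℕ → Fin n :=
  extendFin (fun _ => a) (extendFin a ∘ ω)

theorem sarahE_eq_sum_div {n m S : ℕ} (hn : 0 < n) (X : (ℕ → ℕ → Fin n) → ℝ) :
    sarahE n m S hn X = (∑ ω : Fin S → Fin m → Fin n, X (sarahIndices ⟨0, hn⟩ ω))
      / Fintype.card (Fin S → Fin m → Fin n) := by
  unfold sarahE
  congr 2 with ω
  congr 1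
  funext s t
  by_cases hs : s < S <;> by_cases ht : t < m <;> simp [sarahIndices, extendFin, hs, ht]

section Sarah

variable {d n m : ℕ} {f : Fin n → Vec d → ℝ} {F : Vec d → ℝ} {η L : ℝ}

theorem innerSeq_congr {x0 : Vec d} {ι ι' : ℕ → Fin n} {t : ℕ}
    (h : ∀ j < t, ι j = ι' j) :
    innerSeq d n f F η x0 ι t = innerSeq d n f F η x0 ι' t := by
  induction t with
  | zero => rfl
  | succ t ih =>
    simp only [innerSeq, ih fun j hj => h j (hj.trans t.lt_succ_self), h t t.lt_succ_self]

theorem outerSeq_congr {w0 : Vec d} {ω ω' : ℕ → ℕ → Fin n} {s : ℕ}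
    (h : ∀ j < s, ω j = ω' j) :
    outerSeq d n m f F η w0 ω s = outerSeq d n m f F η w0 ω' s := by
  induction s with
  | zero => rfl
  | succ s ih =>
    simp only [outerSeq, ih fun j hj => h j (hj.trans s.lt_succ_self), h s s.lt_succ_self]

theorem innerSeq_extendFin_update (x0 : Vec d) (a : Fin n) (σ : Fin m → Fin n) (k : Fin m)
    (b : Fin n) {t : ℕ} (ht : t ≤ k) :
    innerSeq d n f F η x0 (extendFin a (Function.update σ k b)) t
      = innerSeq d n f F η x0 (extendFin a σ) t :=
  innerSeq_congr fun _ hj => extendFin_update_of_ne _ _ _ _ (by omega)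

theorem outerSeq_sarahIndices_update {S : ℕ} (w0 : Vec d) (a : Fin n)
    (ω : Fin S → Fin m → Fin n) (k : Fin S) (τ : Fin m → Fin n) {s : ℕ} (hs : s ≤ k) :
    outerSeq d n m f F η w0 (sarahIndices a (Function.update ω k τ)) s
      = outerSeq d n m f F η w0 (sarahIndices a ω) s := by
  rw [sarahIndices, Function.comp_update]
  exact outerSeq_congr fun _ hj => extendFin_update_of_ne _ _ _ _ (by omega)

@[simp]
theorem innerSeq_succ_fst (x0 : Vec d) (ι : ℕ → Fin n) (t : ℕ) :
    (innerSeq d n f F η x0 ι (t + 1)).1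
      = (innerSeq d n f F η x0 ι t).1 - η • (innerSeq d n f F η x0 ι t).2 :=
  rfl

theorem apply_innerSeq_fst_le (hG : ∀ x, HasGradientAt F (gradient F x) x)
    (hLip : ∀ x y, ‖gradient F x - gradient F y‖ ≤ L * ‖x - y‖)
    (x0 : Vec d) (ι : ℕ → Fin n) (T : ℕ) :
    F (innerSeq d n f F η x0 ι T).1 ≤ F x0 - ∑ t ∈ range T,
      (η / 2 * ‖gradient F (innerSeq d n f F η x0 ι t).1‖ ^ 2
        + (η / 2 - L * η ^ 2 / 2) * ‖(innerSeq d n f F η x0 ι t).2‖ ^ 2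
        - η / 2 * ‖gradient F (innerSeq d n f F η x0 ι t).1
          - (innerSeq d n f F η x0 ι t).2‖ ^ 2) := by
  induction T with
  | zero => simp [innerSeq]
  | succ T ih =>
    rw [sum_range_succ, innerSeq_succ_fst]
    linarith [descent_lemma_sub_smul hG hLip η (innerSeq d n f F η x0 ι T).1
      (innerSeq d n f F η x0 ι T).2]

theorem sum_norm_gradient_sub_innerSeq_succ_le (hF : ∀ w, F w = (∑ i, f i w) / n)
    (hdiff : ∀ i, Differentiable ℝ (f i)) (havg : AverageSmooth f L)
    (x0 : Vec d) (a : Fin n) {t : ℕ} (ht : t < m) :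
    ∑ σ : Fin m → Fin n, ‖gradient F (innerSeq d n f F η x0 (extendFin a σ) (t + 1)).1
        - (innerSeq d n f F η x0 (extendFin a σ) (t + 1)).2‖ ^ 2
      ≤ ∑ σ : Fin m → Fin n, ‖gradient F (innerSeq d n f F η x0 (extendFin a σ) t).1
          - (innerSeq d n f F η x0 (extendFin a σ) t).2‖ ^ 2
        + L ^ 2 * η ^ 2
          * ∑ σ : Fin m → Fin n, ‖(innerSeq d n f F η x0 (extendFin a σ) t).2‖ ^ 2 := by
  have hn : 0 < n := Fin.pos_iff_nonempty.mpr ⟨a⟩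
  set k : Fin m := ⟨t, ht⟩
  set u : (Fin m → Fin n) → Vec d × Vec d :=
    fun σ => innerSeq d n f F η x0 (extendFin a σ) t
  set G : Vec d × Vec d → Fin n → ℝ := fun p i => ‖gradient F (p.1 - η • p.2)
    - (gradient (f i) (p.1 - η • p.2) - gradient (f i) p.1 + p.2)‖ ^ 2
  have hstep : ∀ σ, ‖gradient F (innerSeq d n f F η x0 (extendFin a σ) (t + 1)).1
      - (innerSeq d n f F η x0 (extendFin a σ) (t + 1)).2‖ ^ 2 = G (u σ) (σ k) := by
    intro σ
    rw [← extendFin_val a σ k]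
    rfl
  have hindep := card_mul_sum_eq_sum_sum_of_indep k (u := u)
    (fun σ b => innerSeq_extendFin_update (f := f) (F := F) (η := η) x0 a σ k b le_rfl) G
  rw [Fintype.card_fin] at hindep
  refine le_of_mul_le_mul_left ?_ (Nat.cast_pos.mpr hn)
  calc (n : ℝ) * ∑ σ, ‖gradient F (innerSeq d n f F η x0 (extendFin a σ) (t + 1)).1
        - (innerSeq d n f F η x0 (extendFin a σ) (t + 1)).2‖ ^ 2
      = ∑ σ, ∑ i, G (u σ) i := by simp only [hstep, hindep]
    _ ≤ ∑ σ, (n * ‖gradient F (u σ).1 - (u σ).2‖ ^ 2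
          + n * (L ^ 2 * (η ^ 2 * ‖(u σ).2‖ ^ 2))) := by
        refine sum_le_sum fun σ _ => ?_
        have h := sum_norm_gradient_sub_sarah_estimator_le hn hF hdiff havg
          ((u σ).1 - η • (u σ).2) (u σ).1 (u σ).2
        rwa [sub_sub_cancel_left, norm_neg, norm_smul, mul_pow, Real.norm_eq_abs, sq_abs] at h
    _ = _ := by simp only [u, mul_add, mul_sum, sum_add_distrib]; ring_nf

theorem sum_range_sum_norm_gradient_sub_innerSeq_le (hF : ∀ w, F w = (∑ i, f i w) / n)
    (hdiff : ∀ i, Differentiable ℝ (f i)) (havg : AverageSmooth f L) (x0 : Vec d) (a : Fin n) :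
    ∑ t ∈ range (m + 1), ∑ σ : Fin m → Fin n,
        ‖gradient F (innerSeq d n f F η x0 (extendFin a σ) t).1
          - (innerSeq d n f F η x0 (extendFin a σ) t).2‖ ^ 2
      ≤ L ^ 2 * η ^ 2 * m * ∑ t ∈ range (m + 1), ∑ σ : Fin m → Fin n,
          ‖(innerSeq d n f F η x0 (extendFin a σ) t).2‖ ^ 2 := by
  set v : ℕ → ℝ :=
    fun t => ∑ σ : Fin m → Fin n, ‖(innerSeq d n f F η x0 (extendFin a σ) t).2‖ ^ 2
  calc _ ≤ m * ∑ t ∈ range m, L ^ 2 * η ^ 2 * v t :=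
        sum_range_succ_le_mul_sum_of_le_add (by simp [innerSeq])
          (fun t ht => sum_norm_gradient_sub_innerSeq_succ_le hF hdiff havg x0 a ht)
          (fun t => by positivity)
    _ ≤ m * ∑ t ∈ range (m + 1), L ^ 2 * η ^ 2 * v t :=
        mul_le_mul_of_nonneg_left (sum_le_sum_of_subset_of_nonneg
          (range_subset_range.mpr m.le_succ) fun t _ _ => by positivity) m.cast_nonneg
    _ = _ := by rw [← mul_sum]; ring

theorem sum_sum_norm_gradient_innerSeq_le (hF : ∀ w, F w = (∑ i, f i w) / n)
    (hdiff : ∀ i, Differentiable ℝ (f i)) (hL : 0 ≤ L) (havg : AverageSmooth f L)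
    (hη : 0 < η) (hcoef : L ^ 2 * η ^ 2 * m + L * η ≤ 1) (x0 : Vec d) (a : Fin n) :
    ∑ σ : Fin m → Fin n, ∑ t ∈ range (m + 1),
        ‖gradient F (innerSeq d n f F η x0 (extendFin a σ) t).1‖ ^ 2
      ≤ 2 / η * ∑ σ : Fin m → Fin n,
          (F x0 - F (innerSeq d n f F η x0 (extendFin a σ) (m + 1)).1) := by
  have hn : 0 < n := Fin.pos_iff_nonempty.mpr ⟨a⟩
  set W : ℕ → (Fin m → Fin n) → Vec d :=
    fun t σ => (innerSeq d n f F η x0 (extendFin a σ) t).1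
  set V : ℕ → (Fin m → Fin n) → Vec d :=
    fun t σ => (innerSeq d n f F η x0 (extendFin a σ) t).2
  set g : ℕ → ℝ := fun t => ∑ σ, ‖gradient F (W t σ)‖ ^ 2
  set v : ℕ → ℝ := fun t => ∑ σ, ‖V t σ‖ ^ 2
  set e : ℕ → ℝ := fun t => ∑ σ, ‖gradient F (W t σ) - V t σ‖ ^ 2
  have hdescent :
      ∑ t ∈ range (m + 1), (η / 2 * g t + (η / 2 - L * η ^ 2 / 2) * v t - η / 2 * e t)
      ≤ ∑ σ, (F x0 - F (W (m + 1) σ)) := by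
    have h (σ : Fin m → Fin n) := apply_innerSeq_fst_le (f := f) (η := η)
      (hasGradientAt_gradient_of_eq_avg hF hdiff)
      (norm_gradient_sub_le_of_avg hn hF hdiff hL havg) x0 (extendFin a σ) (m + 1)
    calc _ = ∑ σ, ∑ t ∈ range (m + 1), (η / 2 * ‖gradient F (W t σ)‖ ^ 2
          + (η / 2 - L * η ^ 2 / 2) * ‖V t σ‖ ^ 2
          - η / 2 * ‖gradient F (W t σ) - V t σ‖ ^ 2) := by
          rw [sum_comm]; simp only [g, v, e, mul_sum, sum_add_distrib, sum_sub_distrib]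
      _ ≤ _ := sum_le_sum fun σ _ => by linarith [h σ]
  have herror :
      ∑ t ∈ range (m + 1), e t ≤ L ^ 2 * η ^ 2 * m * ∑ t ∈ range (m + 1), v t :=
    sum_range_sum_norm_gradient_sub_innerSeq_le hF hdiff havg x0 a
  simp only [sum_add_distrib, sum_sub_distrib, ← mul_sum] at hdescent
  rw [sum_comm, div_mul_eq_mul_div, le_div_iff₀ hη]
  change (∑ t ∈ range (m + 1), g t) * η ≤ 2 * ∑ σ, (F x0 - F (W (m + 1) σ))
  rw [sum_sub_distrib]
  have habsorb : 0 ≤ η * (1 - L ^ 2 * η ^ 2 * m - L * η) * ∑ t ∈ range (m + 1), v t :=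
    mul_nonneg (mul_nonneg hη.le (by linarith)) (sum_nonneg fun t _ => by positivity)
  linarith [mul_le_mul_of_nonneg_left herror hη.le]

theorem sum_sum_norm_gradient_outerSeq_step_le {S : ℕ} (hF : ∀ w, F w = (∑ i, f i w) / n)
    (hdiff : ∀ i, Differentiable ℝ (f i)) (hL : 0 ≤ L) (havg : AverageSmooth f L)
    (hη : 0 < η) (hcoef : L ^ 2 * η ^ 2 * m + L * η ≤ 1) (w0 : Vec d) (a : Fin n) {s : ℕ}
    (hs : s < S) :
    ∑ ω : Fin S → Fin m → Fin n, ∑ t ∈ range (m + 1), ‖gradient F (innerSeq d n f F η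
        (outerSeq d n m f F η w0 (sarahIndices a ω) s) (sarahIndices a ω s) t).1‖ ^ 2
      ≤ 2 / η * ∑ ω : Fin S → Fin m → Fin n,
          (F (outerSeq d n m f F η w0 (sarahIndices a ω) s)
            - F (outerSeq d n m f F η w0 (sarahIndices a ω) (s + 1))) := by
  set k : Fin S := ⟨s, hs⟩
  set u : (Fin S → Fin m → Fin n) → Vec d :=
    fun ω => outerSeq d n m f F η w0 (sarahIndices a ω) s
  have hu (ω : Fin S → Fin m → Fin n) τ : u (Function.update ω k τ) = u ω :=
    outerSeq_sarahIndices_update w0 a ω k τ le_rfl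
  have hblock (ω : Fin S → Fin m → Fin n) : sarahIndices a ω s = extendFin a (ω k) :=
    extendFin_val _ _ k
  have hnext (ω : Fin S → Fin m → Fin n) : outerSeq d n m f F η w0 (sarahIndices a ω) (s + 1)
      = (innerSeq d n f F η (u ω) (extendFin a (ω k)) (m + 1)).1 := by
    rw [outerSeq, hblock]
  have hgrad := card_mul_sum_eq_sum_sum_of_indep k hu fun x τ =>
    ∑ t ∈ range (m + 1), ‖gradient F (innerSeq d n f F η x (extendFin a τ) t).1‖ ^ 2
  have hval := card_mul_sum_eq_sum_sum_of_indep k hu fun x τ =>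
    F (innerSeq d n f F η x (extendFin a τ) (m + 1)).1
  have hN : (0 : ℝ) < Fintype.card (Fin m → Fin n) := by
    exact_mod_cast Fintype.card_pos_iff.mpr ⟨fun _ => a⟩
  refine le_of_mul_le_mul_left ?_ hN
  simp only [hblock, hnext, sum_sub_distrib, mul_sub]
  calc _ = _ := hgrad
    _ ≤ ∑ ω, 2 / η * ∑ τ : Fin m → Fin n,
          (F (u ω) - F (innerSeq d n f F η (u ω) (extendFin a τ) (m + 1)).1) :=
        sum_le_sum fun ω _ =>
          sum_sum_norm_gradient_innerSeq_le hF hdiff hL havg hη hcoef (u ω) a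
    _ = _ := by
        simp only [← hval, sum_sub_distrib, ← mul_sum, sum_const, card_univ, nsmul_eq_mul]
        ring

theorem sum_sum_sarahE_norm_gradient_le {S : ℕ} (hn : 0 < n)
    (hF : ∀ w, F w = (∑ i, f i w) / n) (hdiff : ∀ i, Differentiable ℝ (f i)) (hL : 0 ≤ L)
    (havg : AverageSmooth f L) (hη : 0 < η) (hcoef : L ^ 2 * η ^ 2 * m + L * η ≤ 1)
    (w0 : Vec d) {Fstar : ℝ} (hFstar : ∀ w, Fstar ≤ F w) :
    ∑ s ∈ range S, ∑ t ∈ range (m + 1), sarahE n m S hn (fun ω =>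
        ‖gradient F (innerSeq d n f F η (outerSeq d n m f F η w0 ω s) (ω s) t).1‖ ^ 2)
      ≤ 2 / η * (F w0 - Fstar) := by
  set N : ℝ := (Fintype.card (Fin S → Fin m → Fin n) : ℝ)
  have hN : 0 < N := Nat.cast_pos.mpr (Fintype.card_pos_iff.mpr ⟨fun _ _ => ⟨0, hn⟩⟩)
  set x : ℕ → (Fin S → Fin m → Fin n) → Vec d :=
    fun s ω => outerSeq d n m f F η w0 (sarahIndices ⟨0, hn⟩ ω) s
  have hlast : N * Fstar ≤ ∑ ω, F (x S ω) := by
    simpa [N] using sum_le_sum fun ω (_ : ω ∈ univ) => hFstar (x S ω)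
  simp only [sarahE_eq_sum_div, ← sum_div]
  rw [div_le_iff₀ hN]
  calc _ = ∑ s ∈ range S, ∑ ω, ∑ t ∈ range (m + 1),
          ‖gradient F (innerSeq d n f F η (x s ω) (sarahIndices ⟨0, hn⟩ ω s) t).1‖ ^ 2 :=
        sum_congr rfl fun s _ => sum_comm
    _ ≤ ∑ s ∈ range S, 2 / η * (∑ ω, F (x s ω) - ∑ ω, F (x (s + 1) ω)) :=
        sum_le_sum fun s hs => (sum_sum_norm_gradient_outerSeq_step_le hF hdiff hL havg hη hcoef
          w0 ⟨0, hn⟩ (mem_range.mp hs)).trans_eq (by rw [sum_sub_distrib])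
    _ = 2 / η * (N * F w0 - ∑ ω, F (x S ω)) := by
        rw [← mul_sum, sum_range_sub']
        simp [x, outerSeq, N]
    _ ≤ 2 / η * (F w0 - Fstar) * N := by
        rw [mul_assoc]; gcongr; linarith

end Sarah

theorem two_div_three_mul_sqrt_le {L : ℝ} (hL : 0 < L) (m : ℝ) (hm : 0 ≤ m) :
    2 / (3 * L * √(m + 1)) ≤ 2 / (L * (√(1 + 4 * m) + 1)) := by
  have h1 : 1 ≤ √(m + 1) := Real.one_le_sqrt.mpr (by linarith)
  have h2 : √(1 + 4 * m) ≤ 2 * √(m + 1) := by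
    rw [show 2 * √(m + 1) = √(4 * (m + 1)) by
      rw [Real.sqrt_mul (by norm_num), show (4 : ℝ) = 2 ^ 2 by norm_num,
        Real.sqrt_sq (by norm_num)]]
    exact Real.sqrt_le_sqrt (by linarith)
  exact div_le_div_of_nonneg_left zero_le_two (by positivity) (by nlinarith)

theorem sq_mul_sq_mul_add_mul_le_one {L η m : ℝ} (hL : 0 < L) (hη : 0 ≤ η) (hm : 0 ≤ m)
    (h : η ≤ 2 / (L * (√(1 + 4 * m) + 1))) : L ^ 2 * η ^ 2 * m + L * η ≤ 1 := by
  set y := √(1 + 4 * m)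
  have hy2 : y ^ 2 = 1 + 4 * m := Real.sq_sqrt (by linarith)
  have hy1 : 1 ≤ y := Real.one_le_sqrt.mpr (by linarith)
  have huy : L * η * (y + 1) ≤ 2 := by
    have := (le_div_iff₀ (by positivity)).mp h
    linarith
  rw [show L ^ 2 * η ^ 2 * m + L * η = m * (L * η) ^ 2 + L * η by ring]
  -- `m = (y - 1)(y + 1)/4`, so `m (Lη)² ≤ (y - 1) Lη / 2` and the total is `≤ (y + 1) Lη / 2`.
  nlinarith [mul_le_mul_of_nonneg_left huy (mul_nonneg (sub_nonneg.mpr hy1) (mul_nonneg hL.le hη))]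

theorem sarah_nonconvex_complexity_general
    (d n m S : ℕ) (hn : 0 < n)
    (f : Fin n → Vec d → ℝ) (F : Vec d → ℝ)
    (hF : ∀ w, F w = (∑ i, f i w) / n)
    (hdiff : ∀ i, Differentiable ℝ (f i))
    (L η : ℝ) (hL : 0 < L)
    (havg : ∀ w w' : Vec d,
      (∑ i, ‖gradient (f i) w - gradient (f i) w'‖ ^ 2) / n ≤ L ^ 2 * ‖w - w'‖ ^ 2)
    (hη : η = 2 / (3 * L * Real.sqrt ((m : ℝ) + 1)))
    (w0 : Vec d) (Fstar : ℝ) (hFstar : ∀ w, Fstar ≤ F w) :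
    η ≤ 2 / (L * (Real.sqrt (1 + 4 * (m : ℝ)) + 1))
    ∧ (∀ ε : ℝ, 0 < ε →
        (S : ℝ) ≥ 3 * L * (F w0 - Fstar) / (Real.sqrt ((m : ℝ) + 1) * ε) →
        1 / (((m : ℝ) + 1) * (S : ℝ)) *
            ∑ s ∈ Finset.range S, ∑ t ∈ Finset.range (m + 1),
              sarahE n m S hn (fun ω =>
                ‖gradient F (innerSeq d n f F η (outerSeq d n m f F η w0 ω s) (ω s) t).1‖ ^ 2)
          ≤ ε)
    ∧ sarahCost n m S = S * (n + 2 * m) := by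
  have hstep : η ≤ 2 / (L * (√(1 + 4 * (m : ℝ)) + 1)) :=
    hη ▸ two_div_three_mul_sqrt_le hL m m.cast_nonneg
  refine ⟨hstep, fun ε hε hS => ?_, rfl⟩
  have hηpos : 0 < η := hη ▸ by positivity
  have hcoef := sq_mul_sq_mul_add_mul_le_one hL hηpos.le m.cast_nonneg hstep
  have hbound := sum_sum_sarahE_norm_gradient_le (S := S) hn hF hdiff hL.le havg hηpos hcoef
    w0 hFstar
  have h2η : 2 / η = 3 * L * √((m : ℝ) + 1) := by rw [hη]; field_simp
  have hgap : 3 * L * √((m : ℝ) + 1) * (F w0 - Fstar) ≤ ε * (((m : ℝ) + 1) * S) := by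
    rw [ge_iff_le, div_le_iff₀ (by positivity)] at hS
    calc 3 * L * √((m : ℝ) + 1) * (F w0 - Fstar)
        = √((m : ℝ) + 1) * (3 * L * (F w0 - Fstar)) := by ring
      _ ≤ √((m : ℝ) + 1) * (S * (√((m : ℝ) + 1) * ε)) := by gcongr
      _ = ε * (((m : ℝ) + 1) * S) := by
          linear_combination (S * ε) * Real.sq_sqrt (by positivity : (0 : ℝ) ≤ m + 1)
  rw [one_div_mul_eq_div]
  exact div_le_of_le_mul₀ (by positivity) hε.le ((h2η ▸ hbound).trans hgap)

/-- **Complexity of SARAH for smooth nonconvex optimization** (Statement 2, Corollary 1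
of the paper). With `η = 2/(3L√(m+1))` we have `η ≤ 2/(L(√(1+4m)+1))`; for every `ε > 0`,
if `S ≥ 3L(F(w̃_0) - F*)/(√(m+1)ε)` then the average of the expected squared gradient
norms is at most `ε`; and the total number of stochastic gradient evaluations is
`S(n + 2m)`. -/
theorem sarah_nonconvex_complexity
    (d n m S : ℕ) (hn : 0 < n) (hS : 0 < S)
    (f : Fin n → Vec d → ℝ) (F : Vec d → ℝ)
    (hF : ∀ w, F w = (∑ i, f i w) / n)
    (hdiff : ∀ i, Differentiable ℝ (f i))
    (L η : ℝ) (hL : 0 < L)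
    (havg : ∀ w w' : Vec d,
      (∑ i, ‖gradient (f i) w - gradient (f i) w'‖ ^ 2) / n ≤ L ^ 2 * ‖w - w'‖ ^ 2)
    (hη : η = 2 / (3 * L * Real.sqrt ((m : ℝ) + 1)))
    (w0 : Vec d) (Fstar : ℝ) (hFstar : ∀ w, Fstar ≤ F w) :
    η ≤ 2 / (L * (Real.sqrt (1 + 4 * (m : ℝ)) + 1))
    ∧ (∀ ε : ℝ, 0 < ε →
        (S : ℝ) ≥ 3 * L * (F w0 - Fstar) / (Real.sqrt ((m : ℝ) + 1) * ε) →
        1 / (((m : ℝ) + 1) * (S : ℝ)) *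
            ∑ s ∈ Finset.range S, ∑ t ∈ Finset.range (m + 1),
              sarahE n m S hn (fun ω =>
                ‖gradient F (innerSeq d n f F η (outerSeq d n m f F η w0 ω s) (ω s) t).1‖ ^ 2)
          ≤ ε)
    ∧ sarahCost n m S = S * (n + 2 * m) :=
  sarah_nonconvex_complexity_general d n m S hn f F hF hdiff L η hL havg hη w0 Fstar hFstar

end
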